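/- arXiv:2403.07545 — 2 statements merged into one kernel-verified Lean document; each statement's English description precedes it below -/
import Mathlib

section
/- Fix an algebraic closure Ω of ℚ and let F ⊆ Ω be a number field (a finite extension of ℚ inside Ω) that is Galois over ℚ and formally real. Then every involution of the absolute Galois group Gal(ℚ) = Aut(Ω|ℚ) fixes F pointwise; consequently, the set of involutions of Aut(Ω|F) equals the set of involutions of Aut(Ω|ℚ). -/
private lemma cone_to_real (L : Type*) [Field L] [Algebra ℚ L] [Algebra.IsAlgebraic ℚ L]
    (C : Set L) (hsq : ∀ x : L, x * x ∈ C) (hadd : ∀ a b : L, a ∈ C → b ∈ C → a + b ∈ C)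
    (hmul : ∀ a b : L, a ∈ C → b ∈ C → a * b ∈ C) (hne : (-1 : L) ∉ C)
    (htot : ∀ a : L, a ∈ C ∨ -a ∈ C) : Nonempty (L →+* ℝ) := by
  have hzero : ∀ a : L, a ∈ C → -a ∈ C → a = 0 := by
    intro a ha hna
    by_contra h
    have key : (-1 : L) = (a * -a) * (a⁻¹ * a⁻¹) := by field_simp
    exact hne (key ▸ hmul _ _ (hmul _ _ ha hna) (hsq _))
  let cone : RingCone L :=
    { carrier := C
      zero_mem' := by simpa using hsq 0
      one_mem' := by simpa using hsq 1
      add_mem' := fun {a b} ha hb => hadd a b ha hb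
      mul_mem' := fun {a b} ha hb => hmul a b ha hb
      eq_zero_of_mem_of_neg_mem' := fun {a} ha hna => hzero a ha hna }
  haveI : HasMemOrNegMem cone := ⟨fun a => htot a⟩
  letI lor : LinearOrder L := by classical exact LinearOrder.mkOfAddGroupCone cone
  haveI : IsOrderedRing L := IsOrderedRing.mkOfCone cone
  have harch : ∀ x : L, ∃ n : ℕ, x ≤ n := by
    intro x
    have hint : IsIntegral ℚ x := (Algebra.IsAlgebraic.isAlgebraic x).isIntegral
    set p := minpoly ℚ x with hp
    have hdeg : 0 < p.natDegree := minpoly.natDegree_pos hint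
    set d := p.natDegree with hd
    set B : ℚ := ∑ i ∈ Finset.range d, |p.coeff i| with hB
    obtain ⟨n, hn⟩ := exists_nat_ge (max B 1)
    refine ⟨n, ?_⟩
    by_contra hlt
    push_neg at hlt
    have hBn : (B : L) ≤ (n : L) := by
      have h : B ≤ (n : ℚ) := le_trans (le_max_left _ _) hn
      have := (Rat.cast_le (K := L)).2 h
      simpa using this
    have h1n : (1 : L) ≤ (n : L) := by
      have h : (1:ℚ) ≤ (n : ℚ) := le_trans (le_max_right _ _) hn
      have := (Rat.cast_le (K := L)).2 h
      simpa using this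
    have h1x : (1 : L) ≤ x := le_of_lt (lt_of_le_of_lt h1n hlt)
    have hxpos : (0 : L) < x := lt_of_lt_of_le one_pos h1x
    have heq : (Polynomial.aeval x) p = 0 := minpoly.aeval ℚ x
    rw [Polynomial.aeval_eq_sum_range, Finset.sum_range_succ] at heq
    have hcd : p.coeff d = 1 := (minpoly.monic hint).coeff_natDegree
    rw [← hd] at heq
    rw [hcd, one_smul] at heq
    have hxd : x ^ d = ∑ i ∈ Finset.range d, -(p.coeff i • x ^ i) := by
      rw [Finset.sum_neg_distrib]
      linarith [heq]
    have hbound : x ^ d ≤ (B : L) * x ^ (d - 1) := by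
      rw [hxd, hB]
      push_cast
      rw [Finset.sum_mul]
      refine Finset.sum_le_sum ?_
      intro i hi
      have hile : i ≤ d - 1 := Nat.le_sub_one_of_lt (Finset.mem_range.1 hi)
      have hpow : x ^ i ≤ x ^ (d - 1) := pow_le_pow_right₀ h1x hile
      have hpownn : (0:L) ≤ x ^ i := pow_nonneg hxpos.le i
      have hsmul : p.coeff i • x ^ i = ((p.coeff i : ℚ) : L) * x ^ i := by
        rw [Algebra.smul_def, eq_ratCast]
      rw [hsmul, ← neg_mul]
      exact mul_le_mul (neg_le_abs _) hpow hpownn (abs_nonneg _)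
    have hxdd : x * x ^ (d - 1) = x ^ d := by
      rw [← pow_succ']
      congr 1
      omega
    have hxB : x ≤ (B : L) := by
      have hpos : (0:L) < x ^ (d - 1) := pow_pos hxpos _
      have := hbound
      rw [← hxdd] at this
      exact le_of_mul_le_mul_right this hpos
    exact absurd (lt_of_lt_of_le hlt (le_trans hxB hBn)) (lt_irrefl _)
  haveI : Archimedean L := archimedean_iff_nat_le.2 harch
  exact ⟨(LinearOrderedField.inducedOrderRingHom L ℝ).toRingHom⟩


private lemma isSumSq_mul_isSumSq {R : Type*} [CommRing R] {a b : R} (ha : IsSumSq a)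
    (hb : IsSumSq b) : IsSumSq (a * b) := by
  induction ha with
  | zero => simpa using IsSumSq.zero
  | @sq_add x s hs ih =>
    rw [add_mul]
    refine IsSumSq.add ?_ ih
    clear ih hs
    induction hb with
    | zero => simpa using IsSumSq.zero
    | @sq_add y t ht ih2 =>
      have h : x * x * (y * y + t) = (x * y) * (x * y) + x * x * t := by ring
      rw [h]
      exact IsSumSq.sq_add _ ih2

private lemma exists_max_cone (L : Type*) [Field L] (hreal : ¬ IsSumSq (-1 : L)) :
    ∃ C : Set L, (∀ x : L, x * x ∈ C) ∧ (∀ a b : L, a ∈ C → b ∈ C → a + b ∈ C) ∧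
      (∀ a b : L, a ∈ C → b ∈ C → a * b ∈ C) ∧ (-1 : L) ∉ C ∧ (∀ a : L, a ∈ C ∨ -a ∈ C) := by
  let S : Set (Set L) := {P | (∀ x : L, x * x ∈ P) ∧ (∀ a b : L, a ∈ P → b ∈ P → a + b ∈ P) ∧
    (∀ a b : L, a ∈ P → b ∈ P → a * b ∈ P) ∧ (-1 : L) ∉ P}
  have hP0 : {a : L | IsSumSq a} ∈ S := by
    refine ⟨fun x => ?_, fun a b ha hb => ha.add hb,
      fun a b ha hb => isSumSq_mul_isSumSq ha hb, hreal⟩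
    have := IsSumSq.sq_add x IsSumSq.zero
    simpa using this
  have hchain : ∀ c ⊆ S, IsChain (· ⊆ ·) c → c.Nonempty → ∃ ub ∈ S, ∀ s ∈ c, s ⊆ ub := by
    intro c hcS hc ⟨t0, ht0⟩
    refine ⟨⋃₀ c, ⟨fun x => Set.mem_sUnion.2 ⟨t0, ht0, (hcS ht0).1 x⟩, ?_, ?_, ?_⟩,
      fun s hs => Set.subset_sUnion_of_mem hs⟩
    · rintro a b ⟨s, hs, has⟩ ⟨t, ht, hbt⟩
      rcases hc.total hs ht with h | h
      · exact Set.mem_sUnion.2 ⟨t, ht, (hcS ht).2.1 a b (h has) hbt⟩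
      · exact Set.mem_sUnion.2 ⟨s, hs, (hcS hs).2.1 a b has (h hbt)⟩
    · rintro a b ⟨s, hs, has⟩ ⟨t, ht, hbt⟩
      rcases hc.total hs ht with h | h
      · exact Set.mem_sUnion.2 ⟨t, ht, (hcS ht).2.2.1 a b (h has) hbt⟩
      · exact Set.mem_sUnion.2 ⟨s, hs, (hcS hs).2.2.1 a b has (h hbt)⟩
    · rintro ⟨s, hs, hmem⟩
      exact (hcS hs).2.2.2 hmem
  obtain ⟨M, _, hMmax⟩ := zorn_subset_nonempty S hchain _ hP0
  obtain ⟨hMsq, hMadd, hMmul, hMne⟩ := hMmax.prop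
  have hM0 : (0 : L) ∈ M := by simpa using hMsq 0
  have hM1 : (1 : L) ∈ M := by simpa using hMsq 1
  refine ⟨M, hMsq, hMadd, hMmul, hMne, ?_⟩
  intro a
  by_contra hcon
  push_neg at hcon
  obtain ⟨ha, hna⟩ := hcon
  set Ma : Set L := {x | ∃ p ∈ M, ∃ q ∈ M, x = p + a * q} with hMa
  have hMsub : M ⊆ Ma := fun p hp => ⟨p, hp, 0, hM0, by ring⟩
  have hMaS : Ma ∈ S := by
    refine ⟨fun x => hMsub (hMsq x), ?_, ?_, ?_⟩
    · rintro x y ⟨p, hp, q, hq, rfl⟩ ⟨p', hp', q', hq', rfl⟩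
      exact ⟨p + p', hMadd _ _ hp hp', q + q', hMadd _ _ hq hq', by ring⟩
    · rintro x y ⟨p, hp, q, hq, rfl⟩ ⟨p', hp', q', hq', rfl⟩
      refine ⟨p * p' + (a * a) * (q * q'),
        hMadd _ _ (hMmul _ _ hp hp') (hMmul _ _ (hMsq a) (hMmul _ _ hq hq')),
        p * q' + q * p', hMadd _ _ (hMmul _ _ hp hq') (hMmul _ _ hq hp'), by ring⟩
    · rintro ⟨p, hp, q, hq, hpq⟩
      by_cases hq0 : q = 0
      · rw [hq0] at hpq
        simp at hpq
        exact hMne (hpq ▸ hp)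
      · have h1 : a * q = -1 - p := by linear_combination -hpq
        have haq : -a = (1 + p) * q * (q⁻¹ * q⁻¹) := by
          have hq' : q * q⁻¹ = 1 := mul_inv_cancel₀ hq0
          field_simp
          linear_combination -h1
        refine hna ?_
        rw [haq]
        exact hMmul _ _ (hMmul _ _ (hMadd _ _ hM1 hp) hq) (hMsq q⁻¹)
  have hMaM : Ma ⊆ M := hMmax.2 hMaS (hMsub)
  exact ha (hMaM ⟨0, hM0, 1, hM1, by ring⟩)


set_option maxHeartbeats 1000000 in
private theorem fix_aux
    (Ω : Type*) [Field Ω] [Algebra ℚ Ω] [IsAlgClosure ℚ Ω]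
    (K : IntermediateField ℚ Ω) [FiniteDimensional ℚ K] [IsGalois ℚ K]
    (hreal : ¬ IsSumSq (-1 : K)) :
    (∀ σ : Ω ≃ₐ[ℚ] Ω, σ * σ = 1 → σ ≠ 1 → ∀ x ∈ K, σ x = x) := by
  haveI : IsAlgClosed Ω := IsAlgClosure.isAlgClosed ℚ
  haveI : CharZero Ω := charZero_of_injective_algebraMap (algebraMap ℚ Ω).injective
  have h2 : (2 : Ω) ≠ 0 := two_ne_zero
  -- square roots and ± lemma
  have SQRT : ∀ t : Ω, ∃ u : Ω, u * u = t := by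
    intro t
    obtain ⟨u, hu⟩ := IsAlgClosed.exists_pow_nat_eq t (n := 2) (by norm_num)
    exact ⟨u, by rw [← pow_two]; exact hu⟩
  have hpm : ∀ u v : Ω, u * u = v * v → u = v ∨ u = -v := by
    intro u v h
    have h0 : (u - v) * (u + v) = 0 := by linear_combination h
    rcases mul_eq_zero.1 h0 with h' | h'
    · exact Or.inl (by linear_combination h')
    · exact Or.inr (by linear_combination h')
  intro σ hσ2 hσ1 x hxK
  have hσσ : ∀ t : Ω, σ (σ t) = t := by
    intro t
    have := congrArg (fun e : Ω ≃ₐ[ℚ] Ω => e t) hσ2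
    simpa using this
  obtain ⟨x₀, hx₀⟩ : ∃ t : Ω, σ t ≠ t := by
    by_contra h
    push_neg at h
    exact hσ1 (AlgEquiv.ext fun t => by simpa using h t)
  obtain ⟨i, hii⟩ := SQRT (-1 : Ω)
  have hine : i ≠ 0 := by
    intro h
    rw [h, mul_zero] at hii
    exact (neg_ne_zero.2 (one_ne_zero : (1:Ω) ≠ 0)) hii.symm
  have hσi : σ i = -i := by
    have hsq : σ i * σ i = i * i := by
      rw [← map_mul, hii, map_neg, map_one]
    rcases hpm (σ i) i hsq with he | ho
    · exfalso
      set z₀ : Ω := x₀ - σ x₀ with hz₀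
      have hz₀ne : z₀ ≠ 0 := sub_ne_zero.2 (Ne.symm hx₀)
      have hσz₀ : σ z₀ = -z₀ := by
        rw [hz₀, map_sub, hσσ]
        ring
      obtain ⟨u, hu⟩ := SQRT z₀
      have hune : u ≠ 0 := by
        intro h0
        rw [h0, mul_zero] at hu
        exact hz₀ne hu.symm
      have hcase : σ u = i * u ∨ σ u = -(i * u) := by
        refine hpm (σ u) (i * u) ?_
        rw [← map_mul, hu, hσz₀]
        linear_combination (-(u * u)) * hii + hu
      rcases hcase with hc | hc
      · have : u = -u := by
          conv_lhs => rw [← hσσ u]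
          rw [hc, map_mul, he, hc]
          linear_combination u * hii
        have h0 : u + u = 0 := by linear_combination this
        exact hune (add_self_eq_zero.1 h0)
      · have : u = -u := by
          conv_lhs => rw [← hσσ u]
          rw [hc, map_neg, map_mul, he, hc]
          linear_combination u * hii
        have h0 : u + u = 0 := by linear_combination this
        exact hune (add_self_eq_zero.1 h0)
    · exact ho
  -- the fixed subfield F
  set F : Subfield Ω :=
    { carrier := {t : Ω | σ t = t}
      zero_mem' := map_zero σ
      one_mem' := map_one σ
      add_mem' := fun {a b} ha hb => by
        simp only [Set.mem_setOf_eq, map_add] at *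
        rw [ha, hb]
      mul_mem' := fun {a b} ha hb => by
        simp only [Set.mem_setOf_eq, map_mul] at *
        rw [ha, hb]
      neg_mem' := fun {a} ha => by
        simp only [Set.mem_setOf_eq, map_neg] at *
        rw [ha]
      inv_mem' := fun a ha => by
        simp only [Set.mem_setOf_eq, map_inv₀] at *
        rw [ha] } with hF
  haveI : CharZero F := ⟨fun m n h => by
    have : ((m : F) : Ω) = ((n : F) : Ω) := congrArg _ h
    push_cast at this
    exact_mod_cast this⟩
  haveI : IsScalarTower ℚ F Ω := IsScalarTower.of_algebraMap_eq fun q => by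
    rw [eq_ratCast (algebraMap ℚ Ω), eq_ratCast (algebraMap ℚ F)]
    push_cast
    rfl
  haveI : Algebra.IsAlgebraic ℚ F := ⟨fun y => by
    have hΩ : IsAlgebraic ℚ (algebraMap F Ω y) :=
      (IsAlgClosure.isAlgebraic (R := ℚ) (K := Ω)).isAlgebraic _
    exact (isAlgebraic_algebraMap_iff (algebraMap F Ω).injective).1 hΩ⟩
  have hmemF : ∀ t : Ω, t ∈ F ↔ σ t = t := fun t => Iff.rfl
  -- sum of two squares of fixed elements is a square of a fixed element
  have f2 : ∀ a b : Ω, σ a = a → σ b = b → ∃ w : Ω, σ w = w ∧ w * w = a * a + b * b := by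
    intro a b ha hb
    obtain ⟨u, hu⟩ := SQRT (a + b * i)
    refine ⟨u * σ u, by rw [map_mul, hσσ]; ring, ?_⟩
    have h1 : (u * σ u) * (u * σ u) = (u * u) * σ (u * u) := by
      rw [map_mul]
      ring
    rw [h1, hu, map_add, map_mul, ha, hb, hσi]
    linear_combination (-(b * b)) * hii
  -- every fixed element is ± a square of a fixed element
  have f4 : ∀ a : Ω, σ a = a → ∃ b : Ω, σ b = b ∧ (a = b * b ∨ a = -(b * b)) := by
    intro a ha
    obtain ⟨u, hu⟩ := SQRT a
    have hc : σ u = u ∨ σ u = -u := by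
      refine hpm (σ u) u ?_
      rw [← map_mul, hu, ha]
    rcases hc with h | h
    · exact ⟨u, h, Or.inl hu.symm⟩
    · refine ⟨u * i, ?_, Or.inr ?_⟩
      · rw [map_mul, h, hσi]
        ring
      · rw [← hu]
        linear_combination (u * u) * hii
  -- -1 is not a square of a fixed element
  have f3 : ∀ b : Ω, σ b = b → b * b ≠ -1 := by
    intro b hb hbb
    have : b = i ∨ b = -i := hpm b i (by rw [hbb, hii])
    rcases this with h | h
    · rw [h] at hb
      rw [hσi] at hb
      have : i + i = 0 := by linear_combination -hb
      exact hine (add_self_eq_zero.1 this)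
    · rw [h] at hb
      rw [map_neg, hσi] at hb
      have : i + i = 0 := by linear_combination hb
      exact hine (add_self_eq_zero.1 this)
  -- the cone of squares in F
  set Csq : Set F := {a : F | ∃ b : F, a = b * b} with hCsq
  have hCsq1 : ∀ x : F, x * x ∈ Csq := fun x => ⟨x, rfl⟩
  have hCsq2 : ∀ a b : F, a ∈ Csq → b ∈ Csq → a + b ∈ Csq := by
    rintro a b ⟨c, rfl⟩ ⟨d, rfl⟩
    obtain ⟨w, hw, hww⟩ := f2 ↑c ↑d c.2 d.2
    refine ⟨⟨w, (hmemF w).2 hw⟩, ?_⟩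
    apply Subtype.ext
    push_cast
    exact hww.symm
  have hCsq3 : ∀ a b : F, a ∈ Csq → b ∈ Csq → a * b ∈ Csq := by
    rintro a b ⟨c, rfl⟩ ⟨d, rfl⟩
    exact ⟨c * d, by ring⟩
  have hCsq4 : (-1 : F) ∉ Csq := by
    rintro ⟨b, hb⟩
    have hb' : (↑b : Ω) * ↑b = -1 := by
      have := congrArg (fun t : F => (t : Ω)) hb
      push_cast at this
      exact this.symm
    exact f3 ↑b b.2 hb'
  have hCsq5 : ∀ a : F, a ∈ Csq ∨ -a ∈ Csq := by
    intro a
    obtain ⟨b, hbF, hcase⟩ := f4 ↑a a.2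
    rcases hcase with h | h
    · exact Or.inl ⟨⟨b, (hmemF b).2 hbF⟩, Subtype.ext (by push_cast; exact h)⟩
    · refine Or.inr ⟨⟨b, (hmemF b).2 hbF⟩, Subtype.ext ?_⟩
      push_cast
      rw [h]
      ring
  obtain ⟨e⟩ := cone_to_real F Csq hCsq1 hCsq2 hCsq3 hCsq4 hCsq5
  -- the real embedding of K
  obtain ⟨CK, hK1, hK2, hK3, hK4, hK5⟩ := exists_max_cone ↥K hreal
  obtain ⟨Φ⟩ := cone_to_real ↥K CK hK1 hK2 hK3 hK4 hK5
  -- even and odd parts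
  set pe : Ω → Ω := fun t => (t + σ t) / 2 with hpe
  set qe : Ω → Ω := fun t => (t - σ t) / (2 * i) with hqe
  have h2i : (2 : Ω) * i ≠ 0 := mul_ne_zero h2 hine
  have hpeF : ∀ t : Ω, σ (pe t) = pe t := by
    intro t
    simp only [hpe]
    rw [map_div₀, map_add, hσσ, map_ofNat]
    ring
  have hqeF : ∀ t : Ω, σ (qe t) = qe t := by
    intro t
    simp only [hqe]
    rw [map_div₀, map_sub, hσσ, map_mul, map_ofNat, hσi]
    rw [div_eq_div_iff (by simpa using h2i) h2i]
    ring
  have hpe1 : pe 1 = 1 := by simp [hpe]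
  have hqe1 : qe 1 = 0 := by simp [hqe]
  have hpe0 : pe 0 = 0 := by simp [hpe]
  have hqe0 : qe 0 = 0 := by simp [hqe]
  have hpe_add : ∀ s t : Ω, pe (s + t) = pe s + pe t := by
    intro s t
    simp only [hpe, map_add]
    ring
  have hqe_add : ∀ s t : Ω, qe (s + t) = qe s + qe t := by
    intro s t
    simp only [hqe, map_add]
    ring
  have hpe_mul : ∀ s t : Ω, pe (s * t) = pe s * pe t - qe s * qe t := by
    intro s t
    simp only [hpe, hqe, map_mul]
    field_simp
    linear_combination ((s - σ s) * (t - σ t)) * hii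
  have hqe_mul : ∀ s t : Ω, qe (s * t) = pe s * qe t + qe s * pe t := by
    intro s t
    simp only [hpe, hqe, map_mul]
    field_simp
    ring
  set PE : ↥K → F := fun k => ⟨pe ↑k, (hmemF _).2 (hpeF ↑k)⟩ with hPE
  set QE : ↥K → F := fun k => ⟨qe ↑k, (hmemF _).2 (hqeF ↑k)⟩ with hQE
  have hPE1 : PE 1 = 1 := Subtype.ext (by push_cast [hPE]; exact hpe1)
  have hQE1 : QE 1 = 0 := Subtype.ext (by push_cast [hQE]; exact hqe1)
  have hPE0 : PE 0 = 0 := Subtype.ext (by push_cast [hPE]; exact hpe0)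
  have hQE0 : QE 0 = 0 := Subtype.ext (by push_cast [hQE]; exact hqe0)
  have hPEadd : ∀ k l : ↥K, PE (k + l) = PE k + PE l := fun k l =>
    Subtype.ext (by push_cast [hPE]; exact hpe_add _ _)
  have hQEadd : ∀ k l : ↥K, QE (k + l) = QE k + QE l := fun k l =>
    Subtype.ext (by push_cast [hQE]; exact hqe_add _ _)
  have hPEmul : ∀ k l : ↥K, PE (k * l) = PE k * PE l - QE k * QE l := fun k l =>
    Subtype.ext (by push_cast [hPE, hQE]; exact hpe_mul _ _)
  have hQEmul : ∀ k l : ↥K, QE (k * l) = PE k * QE l + QE k * PE l := fun k l =>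
    Subtype.ext (by push_cast [hPE, hQE]; exact hqe_mul _ _)
  set ψ : ↥K →+* ℂ :=
    { toFun := fun k => (e (PE k) : ℂ) + (e (QE k) : ℂ) * Complex.I
      map_one' := by
        simp only [hPE1, hQE1, map_one, map_zero]
        simp
      map_mul' := fun k l => by
        simp only [hPEmul k l, hQEmul k l, map_sub, map_add, map_mul]
        apply Complex.ext <;>
          simp [Complex.add_re, Complex.add_im, Complex.mul_re, Complex.mul_im] <;> ring
      map_zero' := by
        simp only [hPE0, hQE0, map_zero]
        simp
      map_add' := fun k l => by
        simp only [hPEadd k l, hQEadd k l, map_add]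
        push_cast
        ring } with hψ
  have hψapp : ∀ kk : ↥K, ψ kk = (e (PE kk) : ℂ) + (e (QE kk) : ℂ) * Complex.I :=
    fun kk => rfl
  -- ψ of any element of K is real, since all conjugates of it lie in the image of Φ
  haveI : Normal ℚ ↥K := IsGalois.to_normal
  set k₀ : ↥K := ⟨x, hxK⟩ with hk₀
  have hint : IsIntegral ℚ k₀ := by
    have hΩ : IsAlgebraic ℚ (algebraMap (↥K) Ω k₀) :=
      (IsAlgClosure.isAlgebraic (R := ℚ) (K := Ω)).isAlgebraic _
    exact ((isAlgebraic_algebraMap_iff (algebraMap (↥K) Ω).injective).1 hΩ).isIntegral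
  set S := minpoly ℚ k₀ with hS
  have hS0 : S ≠ 0 := minpoly.ne_zero hint
  have hsplK : (S.map (algebraMap ℚ ↥K)).Splits := Normal.splits inferInstance k₀
  set p' : Polynomial ↥K := S.map (algebraMap ℚ ↥K) with hp'
  have hsplit' : p'.Splits := hsplK
  set Φc : ↥K →+* ℂ := (Complex.ofRealHom).comp Φ with hΦc
  have hcomm : Φc.comp (algebraMap ℚ ↥K) = algebraMap ℚ ℂ :=
    RingHom.ext fun q => by rw [eq_ratCast (Φc.comp (algebraMap ℚ (↥K))) q, eq_ratCast]
  have hmapmap : p'.map Φc = S.map (algebraMap ℚ ℂ) := by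
    rw [hp', Polynomial.map_map, hcomm]
  have haeval : Polynomial.aeval (ψ k₀) S = 0 := by
    have h := Polynomial.aeval_algHom_apply (RingHom.toRatAlgHom ψ) k₀ S
    rw [minpoly.aeval, map_zero] at h
    exact h
  have hroot : ψ k₀ ∈ (p'.map Φc).roots := by
    rw [hmapmap, Polynomial.mem_roots']
    constructor
    · exact Polynomial.map_ne_zero hS0
    · rw [Polynomial.IsRoot, Polynomial.eval_map, ← Polynomial.aeval_def]
      exact haeval
  rw [hsplit'.roots_map Φc] at hroot
  obtain ⟨r, hrmem, hr⟩ := Multiset.mem_map.1 hroot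
  have him : (ψ k₀).im = 0 := by
    rw [← hr]
    simp [hΦc]
  have hQE0' : e (QE k₀) = 0 := by
    have h : (ψ k₀).im = e (QE k₀) := by
      rw [hψapp]
      simp
    rw [← h, him]
  have hQEzero : QE k₀ = 0 := e.injective (by rw [hQE0', map_zero])
  have hqzero : qe x = 0 := by
    have h := congrArg (fun t : F => (t : Ω)) hQEzero
    push_cast at h
    exact h
  have hsub0 : x - σ x = 0 := by
    rw [hqe] at hqzero
    simp only at hqzero
    rcases div_eq_zero_iff.1 hqzero with h | h
    · exact h
    · exact absurd h h2i
  exact (sub_eq_zero.1 hsub0).symm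

/-- If `K` is a number field inside a fixed algebraic closure `Ω` of
`ℚ` which is Galois over `ℚ` and formally real, then every involution of
`Gal(ℚ) = Ω ≃ₐ[ℚ] Ω` fixes `K` pointwise; consequently the set of involutions of
`Aut(Ω|K)` equals the set of involutions of `Aut(Ω|ℚ)`. -/
theorem involutions_fix_formally_real_galois_number_field
    (Ω : Type*) [Field Ω] [Algebra ℚ Ω] [IsAlgClosure ℚ Ω]
    (K : IntermediateField ℚ Ω) [FiniteDimensional ℚ K] [IsGalois ℚ K]
    (hreal : ¬ IsSumSq (-1 : K)) :
    (∀ σ : Ω ≃ₐ[ℚ] Ω, σ * σ = 1 → σ ≠ 1 → ∀ x ∈ K, σ x = x) ∧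
    ({σ : Ω ≃ₐ[ℚ] Ω | σ ∈ K.fixingSubgroup ∧ σ * σ = 1 ∧ σ ≠ 1} =
      {σ : Ω ≃ₐ[ℚ] Ω | σ * σ = 1 ∧ σ ≠ 1}) := by
  have hfix := fix_aux Ω K hreal
  refine ⟨hfix, ?_⟩
  ext σ
  simp only [Set.mem_setOf_eq]
  constructor
  · rintro ⟨-, h2, h1⟩
    exact ⟨h2, h1⟩
  · rintro ⟨h2, h1⟩
    exact ⟨(IntermediateField.mem_fixingSubgroup_iff K σ).2 (hfix σ h2 h1), h2, h1⟩
end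

section
/- Let F be a field of characteristic 0, Ω a fixed algebraic closure of F, and σ an involution in the absolute Galois group Gal(F). Then the set P[σ] = {a ∈ F : there exists b ∈ Ω with b² = a and σ(b) = b} is an ordering of F: it is closed under addition and multiplication, P[σ] ∩ (−P[σ]) = {0}, and P[σ] ∪ (−P[σ]) = F. -/
/-!
Fix `i ∈ Ω` with `i² = -1`. A nontrivial involution `σ` must send `i` to `-i`: otherwise,
taking `s ≠ 0` with `σ s = -s` and `u² = s`, we get `σ u = ±i u` and then `u = σ (σ u) = -u`.
With `σ i = -i` everything follows from square roots in `Ω`: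
if `b₁, b₂` are fixed and `w² = b₁ + i b₂`, then `w · σ w` is fixed with square `b₁² + b₂²`;
a fixed square root of `a` and one of `-a` differ by a factor `±i`, which `σ` negates, so `a = 0`;
and any square root `z` of `a ∈ F` satisfies `σ z = ±z`, so either `z` or `i z` is fixed.
-/

section Involution

variable {K G : Type*} [Field K] [FunLike G K K] [RingHomClass G K K] {σ : G} {i : K}

lemma exists_map_eq_neg_of_involutive (hσ : Function.Involutive σ) (hnt : ∃ x, σ x ≠ x) :
    ∃ s : K, s ≠ 0 ∧ σ s = -s := by
  obtain ⟨g, hg⟩ := hnt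
  refine ⟨g - σ g, sub_ne_zero.mpr hg.symm, ?_⟩
  rw [map_sub, hσ g, neg_sub]

lemma eq_zero_of_map_sq_eq_neg_sq [CharZero K] (hσ : Function.Involutive σ)
    (hi : i ^ 2 = -1) (hσi : σ i = i) {u : K} (hu : σ u ^ 2 = -u ^ 2) : u = 0 := by
  have hsq : σ u ^ 2 = (i * u) ^ 2 := by rw [hu, mul_pow, hi, neg_one_mul]
  have hσσu : σ (σ u) = -u := by
    rcases sq_eq_sq_iff_eq_or_eq_neg.mp hsq with h | h <;>
      simp only [h, map_neg, map_mul, hσi] <;> linear_combination u * hi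
  exact CharZero.eq_neg_self_iff.mp ((hσ u).symm.trans hσσu)

lemma map_eq_neg_of_sq_eq_neg_one [IsAlgClosed K] [CharZero K] (hσ : Function.Involutive σ)
    (hnt : ∃ x, σ x ≠ x) (hi : i ^ 2 = -1) : σ i = -i := by
  have hsq : σ i ^ 2 = i ^ 2 := by rw [← map_pow, hi, map_neg, map_one]
  refine (sq_eq_sq_iff_eq_or_eq_neg.mp hsq).resolve_left fun hσi => ?_
  obtain ⟨s, hs0, hσs⟩ := exists_map_eq_neg_of_involutive hσ hnt
  obtain ⟨u, rfl⟩ := IsAlgClosed.exists_pow_nat_eq s two_pos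
  rw [map_pow] at hσs
  exact hs0 (by rw [eq_zero_of_map_sq_eq_neg_sq hσ hi hσi hσs, zero_pow two_ne_zero])

lemma exists_fixed_sq_eq_sq_add_sq [IsAlgClosed K] (hσ : Function.Involutive σ)
    (hi : i ^ 2 = -1) (hσi : σ i = -i) {b₁ b₂ : K} (hb₁ : σ b₁ = b₁) (hb₂ : σ b₂ = b₂) :
    ∃ w : K, w ^ 2 = b₁ ^ 2 + b₂ ^ 2 ∧ σ w = w := by
  obtain ⟨w, hw⟩ := IsAlgClosed.exists_pow_nat_eq (b₁ + i * b₂) two_pos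
  refine ⟨w * σ w, ?_, by rw [map_mul, hσ w, mul_comm]⟩
  calc (w * σ w) ^ 2 = (b₁ + i * b₂) * (b₁ - i * b₂) := by
        rw [mul_pow, ← map_pow, hw, map_add, map_mul, hσi, hb₁, hb₂]; ring
    _ = b₁ ^ 2 + b₂ ^ 2 := by linear_combination (-b₂ ^ 2) * hi

lemma eq_zero_of_fixed_sq_eq_neg_fixed_sq [CharZero K] (hi : i ^ 2 = -1) (hσi : σ i = -i)
    {b c : K} (hb : σ b = b) (hc : σ c = c) (hbc : b ^ 2 = -c ^ 2) : b = 0 := by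
  have hσic : σ (i * c) = -(i * c) := by rw [map_mul, hσi, hc, neg_mul]
  have hsq : b ^ 2 = (i * c) ^ 2 := by rw [hbc, mul_pow, hi, neg_one_mul]
  have hσb : σ b = -b := by
    rcases sq_eq_sq_iff_eq_or_eq_neg.mp hsq with rfl | rfl
    · exact hσic
    · rw [map_neg, hσic]
  exact CharZero.eq_neg_self_iff.mp (hb.symm.trans hσb)

lemma exists_fixed_sq_eq_or_eq_neg [IsAlgClosed K] (hi : i ^ 2 = -1) (hσi : σ i = -i)
    {x : K} (hx : σ x = x) : ∃ z : K, (z ^ 2 = x ∨ z ^ 2 = -x) ∧ σ z = z := by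
  obtain ⟨z, rfl⟩ := IsAlgClosed.exists_pow_nat_eq x two_pos
  rw [map_pow] at hx
  rcases sq_eq_sq_iff_eq_or_eq_neg.mp hx with h | h
  · exact ⟨z, Or.inl rfl, h⟩
  · refine ⟨i * z, Or.inr ?_, ?_⟩
    · rw [mul_pow, hi, neg_one_mul]
    · rw [map_mul, hσi, h, neg_mul_neg]

end Involution

/-- For a field `F` of characteristic `0` with algebraic closure `Ω`
and an involution `σ` in `Gal(F) = Ω ≃ₐ[F] Ω`, the set
`P[σ] = {a ∈ F | ∃ b ∈ Ω, b² = a and σ b = b}` is an ordering of `F`: it is closed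
under addition and multiplication, `P ∩ (−P) = {0}`, and `P ∪ (−P) = F`. -/
theorem ordering_from_involution
    (F Ω : Type*) [Field F] [CharZero F] [Field Ω] [Algebra F Ω] [IsAlgClosure F Ω]
    (σ : Ω ≃ₐ[F] Ω) (hσ2 : σ * σ = 1) (hσ1 : σ ≠ 1)
    (P : Set F) (hP : P = {a : F | ∃ b : Ω, b ^ 2 = algebraMap F Ω a ∧ σ b = b}) :
    (∀ a ∈ P, ∀ b ∈ P, a + b ∈ P) ∧
    (∀ a ∈ P, ∀ b ∈ P, a * b ∈ P) ∧
    (P ∩ (-P) = {0}) ∧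
    (P ∪ (-P) = Set.univ) := by
  have : IsAlgClosed Ω := IsAlgClosure.isAlgClosed F
  have : CharZero Ω := charZero_of_injective_algebraMap (algebraMap F Ω).injective
  have hσ : Function.Involutive σ := fun x => by
    rw [← AlgEquiv.mul_apply, hσ2, AlgEquiv.one_apply]
  have hnt : ∃ x, σ x ≠ x := by simpa [AlgEquiv.ext_iff] using hσ1
  obtain ⟨i, hi⟩ := IsAlgClosed.exists_pow_nat_eq (-1 : Ω) two_pos
  have hσi := map_eq_neg_of_sq_eq_neg_one hσ hnt hi
  subst hP
  refine ⟨?_, ?_, ?_, ?_⟩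
  · rintro a ⟨b₁, hb₁, hσb₁⟩ b ⟨b₂, hb₂, hσb₂⟩
    obtain ⟨w, hw, hσw⟩ := exists_fixed_sq_eq_sq_add_sq hσ hi hσi hσb₁ hσb₂
    exact ⟨w, by rw [hw, hb₁, hb₂, map_add], hσw⟩
  · rintro a ⟨b₁, hb₁, hσb₁⟩ b ⟨b₂, hb₂, hσb₂⟩
    exact ⟨b₁ * b₂, by rw [mul_pow, hb₁, hb₂, map_mul], by rw [map_mul, hσb₁, hσb₂]⟩
  · ext a
    refine ⟨fun ⟨⟨b, hb, hσb⟩, c, hc, hσc⟩ => ?_, ?_⟩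
    · have hbc : b ^ 2 = -c ^ 2 := by rw [hb, hc, map_neg, neg_neg]
      have hb0 := eq_zero_of_fixed_sq_eq_neg_fixed_sq hi hσi hσb hσc hbc
      rwa [hb0, zero_pow two_ne_zero, eq_comm, map_eq_zero] at hb
    · rintro rfl
      exact ⟨⟨0, by simp, map_zero σ⟩, ⟨0, by simp, map_zero σ⟩⟩
  · refine Set.eq_univ_of_forall fun a => ?_
    obtain ⟨z, hz, hσz⟩ := exists_fixed_sq_eq_or_eq_neg hi hσi (σ.commutes a)
    exact hz.imp (fun hz => ⟨z, hz, hσz⟩) (fun hz => ⟨z, by rw [hz, map_neg], hσz⟩)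
end
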